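/- Any strategy that is myopically optimal at every chain is robust: for every reachable chain H and every incentive compatible H-deviation σ', the infimum of V_d(H', σ) over best-response extensions H' of H is at least the infimum of V_d(H', σ') over all extensions H' of H. -/

import Mathlib

/-- A consistent sequence: a nonempty, strictly increasing chain beginning at `h₀`. -/
def Cons {𝓗 : Type} [Preorder 𝓗] (h₀ : 𝓗) (H : List 𝓗) : Prop :=
  H ≠ [] ∧ H.head? = some h₀ ∧ H.Chain' (· < ·)

/-- Membership in `𝓗(h₀, h)`. -/
def Memb {𝓗 : Type} [Preorder 𝓗] (h₀ h : 𝓗) (H : List 𝓗) : Prop :=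
  Cons h₀ H ∧ H.getLastD h₀ ≤ h

/-- The value to a player (with contract-value functional `V`) of the chain `H`
under strategy `σ`: the value of the contract offered at the final revelation. -/
def val {𝓗 : Type} [Preorder 𝓗] (h₀ : 𝓗) {C : 𝓗 → Type} (V : (h : 𝓗) → C h → ℝ)
    (σ : (H : List 𝓗) → C (H.getLastD h₀)) (H : List 𝓗) : ℝ :=
  V (H.getLastD h₀) (σ H)

/-- `H` is a best response to `σ` for type `h`. -/
def BRs {𝓗 : Type} [Preorder 𝓗] (h₀ : 𝓗) {C : 𝓗 → Type} (Ve : (h : 𝓗) → C h → ℝ)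
    (σ : (H : List 𝓗) → C (H.getLastD h₀)) (h : 𝓗) (H : List 𝓗) : Prop :=
  Memb h₀ h H ∧ ∀ H', Memb h₀ h H' → val h₀ Ve σ H' ≤ val h₀ Ve σ H

/-- Incentive compatibility: expert value monotone along extensions. -/
def ICs {𝓗 : Type} [Preorder 𝓗] (h₀ : 𝓗) {C : 𝓗 → Type} (Ve : (h : 𝓗) → C h → ℝ)
    (σ : (H : List 𝓗) → C (H.getLastD h₀)) : Prop :=
  ∀ H H' : List 𝓗, Cons h₀ H → H' ≠ [] → H' <+: H → val h₀ Ve σ H' ≤ val h₀ Ve σ H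

/-- `H` is reachable under `σ`: extended by some best response of some type. -/
def Reach {𝓗 : Type} [Preorder 𝓗] (h₀ : 𝓗) {C : 𝓗 → Type} (Ve : (h : 𝓗) → C h → ℝ)
    (σ : (H : List 𝓗) → C (H.getLastD h₀)) (H : List 𝓗) : Prop :=
  ∃ (h : 𝓗) (H' : List 𝓗), BRs h₀ Ve σ h H' ∧ H <+: H'

/-- `σ'` is an `H`-deviation from `σ`: it agrees with `σ` on all chains with
strictly coarser final element, and differs at `H`. -/
def Dev {𝓗 : Type} [Preorder 𝓗] (h₀ : 𝓗) {C : 𝓗 → Type}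
    (σ σ' : (H : List 𝓗) → C (H.getLastD h₀)) (H : List 𝓗) : Prop :=
  (∀ H' : List 𝓗, Cons h₀ H' → H'.getLastD h₀ < H.getLastD h₀ → σ' H' = σ H') ∧ σ' H ≠ σ H

/-- Robustness: at every reachable chain, the worst case (over best-response
extensions) of `σ` is at least the worst case (over all extensions) of any
incentive compatible `H`-deviation. -/
def Robust {𝓗 : Type} [Preorder 𝓗] (h₀ : 𝓗) {C : 𝓗 → Type} (Vd Ve : (h : 𝓗) → C h → ℝ)
    (σ : (H : List 𝓗) → C (H.getLastD h₀)) : Prop :=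
  ∀ H : List 𝓗, Cons h₀ H → Reach h₀ Ve σ H →
    ∀ σ' : (H : List 𝓗) → C (H.getLastD h₀), ICs h₀ Ve σ' → Dev h₀ σ σ' H →
      sInf {x : ℝ | ∃ H' : List 𝓗, Cons h₀ H' ∧ H <+: H' ∧ x = val h₀ Vd σ' H'} ≤
      sInf {x : ℝ | ∃ (h : 𝓗) (H' : List 𝓗), BRs h₀ Ve σ h H' ∧ H <+: H' ∧ x = val h₀ Vd σ H'}


/-! Along a chain, a myopically optimal strategy never lowers the designer's value: the contract
offered one step earlier, pulled back to the finer revelation, meets the expert's participation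
constraint and has the same designer value, so the myopic argmax does at least as well. Hence the
worst case of `σ` over best responses extending a reachable chain `H` is at least its value at `H`.
An IC deviation `σ'` at `H` offers at `H` a contract that satisfies the same constraint (it agrees
with `σ` on `H.dropLast`), so it cannot beat `σ` there, and its worst case over all extensions is
at most its value at `H`. -/

section Chains

variable {𝓗 : Type} [Preorder 𝓗] {h₀ : 𝓗} {H : List 𝓗}

lemma Cons.dropLast (hH : Cons h₀ H) (hlen : 2 ≤ H.length) : Cons h₀ H.dropLast := by
  obtain ⟨-, hhead, hchain⟩ := hH
  refine ⟨?_, ?_, hchain.dropLast⟩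
  · rw [← List.length_pos_iff, List.length_dropLast]
    omega
  · rwa [List.head?_dropLast, if_pos (by omega)]

lemma Cons.getLastD_dropLast_lt (hH : Cons h₀ H) (hlen : 2 ≤ H.length) :
    H.dropLast.getLastD h₀ < H.getLastD h₀ := by
  have hne : H.dropLast ≠ [] := (hH.dropLast hlen).1
  simpa [List.getLast?_eq_some_getLast hne, List.getLast?_eq_some_getLast hH.1] using
    hH.2.2.rel_getLast_dropLast hne

lemma Cons.length_le_card [Fintype 𝓗] (hH : Cons h₀ H) : H.length ≤ Fintype.card 𝓗 :=
  List.Nodup.length_le_card ((List.isChain_iff_pairwise.mp hH.2.2).imp ne_of_lt)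

lemma finite_setOf_cons [Fintype 𝓗] (h₀ : 𝓗) : {H : List 𝓗 | Cons h₀ H}.Finite :=
  (List.finite_length_le 𝓗 (Fintype.card 𝓗)).subset fun _ hH => Cons.length_le_card hH

end Chains

section Myopic

variable {𝓗 : Type} [Preorder 𝓗] {h₀ : 𝓗} {C : 𝓗 → Type} {Vd Ve : (h : 𝓗) → C h → ℝ}
  {σ : (H : List 𝓗) → C (H.getLastD h₀)}

def IsMyopicArgmax (h₀ : 𝓗) (Vd Ve : (h : 𝓗) → C h → ℝ)
    (σ : (H : List 𝓗) → C (H.getLastD h₀)) : Prop :=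
  (∀ H : List 𝓗, Cons h₀ H → H.length = 1 →
      ∀ c : C (H.getLastD h₀), Vd (H.getLastD h₀) c ≤ Vd (H.getLastD h₀) (σ H)) ∧
  ∀ H : List 𝓗, Cons h₀ H → 2 ≤ H.length →
    ∀ c : C (H.getLastD h₀),
      Ve (H.dropLast.getLastD h₀) (σ H.dropLast) ≤ Ve (H.getLastD h₀) c →
      Vd (H.getLastD h₀) c ≤ Vd (H.getLastD h₀) (σ H)

namespace IsMyopicArgmax

variable (hσ : IsMyopicArgmax h₀ Vd Ve σ) (pb : ∀ {h h' : 𝓗}, h ≤ h' → C h → C h')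
  (hpbd : ∀ {h h' : 𝓗} (l : h ≤ h') (c : C h), Vd h' (pb l c) = Vd h c)
  (hpbe : ∀ {h h' : 𝓗} (l : h ≤ h') (c : C h), Ve h' (pb l c) = Ve h c)
include hσ pb hpbd hpbe

lemma val_dropLast_le {H : List 𝓗} (hH : Cons h₀ H) (hlen : 2 ≤ H.length) :
    val h₀ Vd σ H.dropLast ≤ val h₀ Vd σ H := by
  have hle := (hH.getLastD_dropLast_lt hlen).le
  simpa only [val, hpbd] using
    hσ.2 H hH hlen (pb hle (σ H.dropLast)) (hpbe hle (σ H.dropLast)).ge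

lemma val_le_val_append {H : List 𝓗} (hne : H ≠ []) (t : List 𝓗) (hHt : Cons h₀ (H ++ t)) :
    val h₀ Vd σ H ≤ val h₀ Vd σ (H ++ t) := by
  induction t using List.reverseRecOn with
  | nil => simp
  | append_singleton t a ih =>
    rw [← List.append_assoc] at hHt ⊢
    have hlen : 2 ≤ (H ++ t ++ [a]).length := by
      have := List.length_pos_iff.mpr hne
      simp only [List.length_append, List.length_singleton]
      omega
    have hstep := hσ.val_dropLast_le pb hpbd hpbe hHt hlen
    rw [List.dropLast_concat] at hstep
    exact (ih (by simpa using hHt.dropLast hlen)).trans hstep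

end IsMyopicArgmax

lemma IsMyopicArgmax.val_le_of_deviation (hσ : IsMyopicArgmax h₀ Vd Ve σ)
    {σ' : (H : List 𝓗) → C (H.getLastD h₀)} (hIC : ICs h₀ Ve σ') {H : List 𝓗} (hH : Cons h₀ H)
    (hagree : ∀ H' : List 𝓗, Cons h₀ H' → H'.getLastD h₀ < H.getLastD h₀ → σ' H' = σ H') :
    val h₀ Vd σ' H ≤ val h₀ Vd σ H := by
  obtain hlen | hlen : H.length = 1 ∨ 2 ≤ H.length := by
    have := List.length_pos_iff.mpr hH.1
    omega
  · exact hσ.1 H hH hlen (σ' H)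
  · have hic := hIC H H.dropLast hH (hH.dropLast hlen).1 H.dropLast_prefix
    rw [val, val, hagree _ (hH.dropLast hlen) (hH.getLastD_dropLast_lt hlen)] at hic
    exact hσ.2 H hH hlen (σ' H) hic

end Myopic

/-- any strategy that is myopically optimal at every chain is robust. -/
theorem myopic_implies_robust
    {𝓗 : Type} [Fintype 𝓗] [PartialOrder 𝓗] (h₀ : 𝓗)
    (C : 𝓗 → Type) (Vd Ve : (h : 𝓗) → C h → ℝ)
    (pb : ∀ {h h' : 𝓗}, h ≤ h' → C h → C h')
    (hpbd : ∀ {h h' : 𝓗} (l : h ≤ h') (c : C h), Vd h' (pb l c) = Vd h c)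
    (hpbe : ∀ {h h' : 𝓗} (l : h ≤ h') (c : C h), Ve h' (pb l c) = Ve h c)
    (σ : (H : List 𝓗) → C (H.getLastD h₀))
    (hmyo1 : ∀ H : List 𝓗, Cons h₀ H → H.length = 1 →
      ∀ c : C (H.getLastD h₀), Vd (H.getLastD h₀) c ≤ Vd (H.getLastD h₀) (σ H))
    (hmyo : ∀ H : List 𝓗, Cons h₀ H → 2 ≤ H.length →
      Ve (H.dropLast.getLastD h₀) (σ H.dropLast) ≤ Ve (H.getLastD h₀) (σ H) ∧
      ∀ c : C (H.getLastD h₀),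
        Ve (H.dropLast.getLastD h₀) (σ H.dropLast) ≤ Ve (H.getLastD h₀) c →
        Vd (H.getLastD h₀) c ≤ Vd (H.getLastD h₀) (σ H)) :
    Robust h₀ Vd Ve σ := by
  have hσ : IsMyopicArgmax h₀ Vd Ve σ := ⟨hmyo1, fun H hH hlen => (hmyo H hH hlen).2⟩
  rintro H hH ⟨h, H', hBR, hpre⟩ σ' hIC hDev
  refine le_csInf ?_ ?_
  · exact ⟨_, h, H', hBR, hpre, rfl⟩
  rintro _ ⟨_, _, hBR', ⟨t, rfl⟩, rfl⟩
  calc _ ≤ val h₀ Vd σ' H := csInf_le ?_ (by exact ⟨H, hH, List.prefix_refl H, rfl⟩)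
    _ ≤ val h₀ Vd σ H := hσ.val_le_of_deviation hIC hH hDev.1
    _ ≤ _ := hσ.val_le_val_append pb hpbd hpbe hH.1 t hBR'.1.1
  refine (((finite_setOf_cons h₀).image (val h₀ Vd σ')).subset ?_).bddBelow
  rintro _ ⟨H', hH', -, rfl⟩
  exact ⟨H', hH', rfl⟩
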